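/- arXiv:1309.4534 — 5 statements merged into one kernel-verified Lean document; each statement's English description precedes it below -/
import Mathlib

section
/- Let n ≥ 2 and let z₀, …, zₙ be positive real numbers satisfying the simplex inequalities 2·z_k < z₀ + ⋯ + zₙ for every k with 0 ≤ k ≤ n. Then there exist vectors 𝐳₀, …, 𝐳ₙ in ℝⁿ whose ℝ-linear span is all of ℝⁿ, such that 𝐳₀ + ⋯ + 𝐳ₙ = 0 and ‖𝐳_k‖ = z_k for every k. -/
open scoped RealInnerProductSpace BigOperators

/-!
Induction on `n`. Replace `z₀, z₁` by one length `L` with `|z₀ - z₁| < L < z₀ + z₁` for which the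
shorter family still satisfies the simplex inequalities; such an `L` exists because every lower
bound on it is below every upper bound. Realize the shorter family in the hyperplane `w⊥` of a unit
vector `w`, then split the vector of length `L` into two vectors of lengths `z₀, z₁` which form a
nondegenerate triangle with it in the plane spanned by it and `w`. The new family
still sums to zero, and it spans because it contains `w⊥` and has a component along `w`. The base
case `n = 2` is the same splitting applied to the pair `u, -u` on a line.
-/

open Module Submodule Set

section

variable {F : Type*} [NormedAddCommGroup F] [InnerProductSpace ℝ F]

lemma norm_smul_add_smul_sq_of_inner_eq_zero {u w : F} (huw : ⟪u, w⟫ = 0) (s t : ℝ) :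
    ‖s • u + t • w‖ ^ 2 = s ^ 2 * ‖u‖ ^ 2 + t ^ 2 * ‖w‖ ^ 2 := by
  rw [norm_add_sq_real, real_inner_smul_left, real_inner_smul_right, huw, norm_smul, norm_smul,
    Real.norm_eq_abs, Real.norm_eq_abs, mul_pow, mul_pow, sq_abs, sq_abs]
  ring

lemma exists_add_eq_of_abs_sub_lt_norm_lt_add {u w : F} (huw : ⟪u, w⟫ = 0) (hw : ‖w‖ = 1)
    {p q : ℝ} (h₁ : |p - q| < ‖u‖) (h₂ : ‖u‖ < p + q) :
    ∃ a b : F, a + b = u ∧ ‖a‖ = p ∧ ‖b‖ = q ∧ w ∈ span ℝ {u, a} := by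
  have hpq := abs_sub_lt_iff.mp h₁
  have hu : 0 < ‖u‖ := (abs_nonneg _).trans_lt h₁
  have hp : 0 < p := by linarith
  have hq : 0 < q := by linarith
  -- `x` is the signed length of the projection of `a` onto `u` (law of cosines).
  obtain ⟨x, hx⟩ : ∃ x, 2 * ‖u‖ * x = ‖u‖ ^ 2 + p ^ 2 - q ^ 2 :=
    ⟨_, mul_div_cancel₀ _ (by positivity)⟩
  have hxp : x ^ 2 < p ^ 2 := by
    have : (2 * ‖u‖ * x) ^ 2 < (2 * ‖u‖ * p) ^ 2 := by
      rw [hx]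
      nlinarith [mul_pos (mul_pos (by linarith : 0 < p + q - ‖u‖) (by linarith : 0 < q + ‖u‖ - p))
        (mul_pos (by linarith : 0 < ‖u‖ + p - q) (by linarith : 0 < ‖u‖ + p + q))]
    rw [mul_pow (2 * ‖u‖) x, mul_pow (2 * ‖u‖) p] at this
    exact lt_of_mul_lt_mul_left this (by positivity)
  set h := √(p ^ 2 - x ^ 2)
  have hh : h ^ 2 = p ^ 2 - x ^ 2 := Real.sq_sqrt (by linarith)
  have hh₀ : h ≠ 0 := (Real.sqrt_pos.mpr (by linarith)).ne'
  set a := (x / ‖u‖) • u + h • w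
  refine ⟨a, (1 - x / ‖u‖) • u + (-h) • w, by module, ?_, ?_, ?_⟩
  · rw [← sq_eq_sq₀ (norm_nonneg _) hp.le, norm_smul_add_smul_sq_of_inner_eq_zero huw, hw, hh]
    field_simp
    ring
  · rw [← sq_eq_sq₀ (norm_nonneg _) hq.le, norm_smul_add_smul_sq_of_inner_eq_zero huw, hw,
      neg_sq, hh]
    field_simp
    linear_combination -hx
  · have : w = h⁻¹ • a - (h⁻¹ * (x / ‖u‖)) • u := by
      rw [smul_add, smul_smul, smul_smul, inv_mul_cancel₀ hh₀, one_smul]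
      abel
    rw [this]
    exact sub_mem (smul_mem _ _ (subset_span (by simp))) (smul_mem _ _ (subset_span (by simp)))

lemma exists_split_head_of_orthogonal {m : ℕ} {w : F} (hw : ‖w‖ = 1) (V : Fin (m + 1) → (ℝ ∙ w)ᗮ)
    (hV : span ℝ (range V) = ⊤) (hsum : ∑ i, V i = 0) {p q : ℝ} (h₁ : |p - q| < ‖V 0‖)
    (h₂ : ‖V 0‖ < p + q) :
    ∃ a b : F, span ℝ (range (Fin.cons a (Fin.cons b fun k => (V k.succ : F)) : Fin (m + 2) → F))
      = ⊤ ∧ ∑ i, (Fin.cons a (Fin.cons b fun k => (V k.succ : F)) : Fin (m + 2) → F) i = 0 ∧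
      ‖a‖ = p ∧ ‖b‖ = q := by
  have huw : ⟪(V 0 : F), w⟫ = 0 := mem_orthogonal_singleton_iff_inner_left.mp (V 0).2
  obtain ⟨a, b, hab, ha, hb, hw_mem⟩ := exists_add_eq_of_abs_sub_lt_norm_lt_add huw hw h₁ h₂
  refine ⟨a, b, ?_, ?_, ha, hb⟩
  · set S := span ℝ (range (Fin.cons a (Fin.cons b fun k => (V k.succ : F)) : Fin (m + 2) → F))
    have haS : a ∈ S := subset_span ⟨0, rfl⟩
    have hbS : b ∈ S := subset_span ⟨1, rfl⟩
    have hVS : ∀ k, (V k : F) ∈ S := Fin.cases (hab ▸ add_mem haS hbS) fun k =>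
      subset_span ⟨k.succ.succ, rfl⟩
    have hWS : (ℝ ∙ w)ᗮ ≤ S := by
      rw [← (span_range_subtype_eq_top_iff _ fun k => (V k).2).mp hV, span_le]
      rintro _ ⟨k, rfl⟩
      exact hVS k
    have hwS : w ∈ S := span_le.mpr (insert_subset_iff.mpr ⟨hVS 0, singleton_subset_iff.mpr haS⟩) hw_mem
    rw [eq_top_iff, ← sup_orthogonal_of_hasOrthogonalProjection (K := ℝ ∙ w)]
    exact sup_le ((span_singleton_le_iff_mem _ _).mpr hwS) hWS
  · rw [Fin.sum_cons, Fin.sum_cons, ← add_assoc, hab,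
      ← Fin.sum_univ_succ (f := fun i => (V i : F)), ← coe_sum, hsum, ZeroMemClass.coe_zero]

lemma exists_norm_eq_span_singleton_eq_top {E : Type*} [NormedAddCommGroup E] [NormedSpace ℝ E]
    (hE : finrank ℝ E = 1) {c : ℝ} (hc : 0 < c) : ∃ u : E, ‖u‖ = c ∧ ℝ ∙ u = ⊤ := by
  have : Nontrivial E := nontrivial_of_finrank_eq_succ hE
  obtain ⟨v, hv⟩ := exists_ne (0 : E)
  have hu : ‖(c / ‖v‖) • v‖ = c := by
    rw [norm_smul, Real.norm_eq_abs, abs_of_pos (by positivity), div_mul_cancel₀ _ (by simpa)]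
  exact ⟨_, hu, (finrank_eq_one_iff_of_nonzero _ (norm_pos_iff.mp (by rw [hu]; exact hc))).mp hE⟩

lemma exists_norm_eq_one_finrank_orthogonal {n : ℕ} (hF : finrank ℝ F = n + 1) :
    ∃ w : F, ‖w‖ = 1 ∧ finrank ℝ (ℝ ∙ w)ᗮ = n := by
  have : Nontrivial F := nontrivial_of_finrank_eq_succ hF
  have : Fact (finrank ℝ F = n + 1) := ⟨hF⟩
  obtain ⟨v, hv⟩ := exists_ne (0 : F)
  have hw := norm_smul_inv_norm (𝕜 := ℝ) hv
  exact ⟨_, hw, finrank_orthogonal_span_singleton (norm_ne_zero_iff.mp (hw.trans_ne one_ne_zero))⟩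

end

lemma exists_merged_length {m : ℕ} (hm : 2 ≤ m) (z : Fin (m + 2) → ℝ) (hpos : ∀ k, 0 < z k)
    (hineq : ∀ k, 2 * z k < ∑ i, z i) :
    ∃ L, |z 0 - z 1| < L ∧ L < z 0 + z 1 ∧
      (∀ k, 0 < (Fin.cons L fun k => z k.succ.succ : Fin (m + 1) → ℝ) k) ∧
      ∀ k, 2 * (Fin.cons L fun k => z k.succ.succ : Fin (m + 1) → ℝ) k <
        ∑ i, (Fin.cons L fun k => z k.succ.succ : Fin (m + 1) → ℝ) i := by
  set R := ∑ k : Fin m, z k.succ.succ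
  have hS : ∑ i, z i = z 0 + z 1 + R := by
    simp only [Fin.sum_univ_succ, Fin.succ_zero_eq_one, R]
    ring
  have : Nonempty (Fin m) := ⟨⟨0, by omega⟩⟩
  obtain ⟨k₀, -, hk₀⟩ := Finset.univ.exists_max_image (fun k : Fin m => z k.succ.succ)
    Finset.univ_nonempty
  have hk₀R : z k₀.succ.succ < R := by
    obtain ⟨j, hj⟩ := Fintype.exists_ne_of_one_lt_card (by rw [Fintype.card_fin]; omega) k₀
    exact Finset.single_lt_sum (f := fun k : Fin m => z k.succ.succ) hj (Finset.mem_univ _)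
      (Finset.mem_univ _) (hpos _) fun k _ _ => (hpos _).le
  have h₀ := hineq 0
  have h₁ := hineq 1
  have hk₀ineq := hineq k₀.succ.succ
  have hz₀ := hpos 0
  have hz₁ := hpos 1
  obtain ⟨L, hlo, hhi⟩ : ∃ L, max |z 0 - z 1| (2 * z k₀.succ.succ - R) < L ∧
      L < min (z 0 + z 1) R :=
    exists_between <| max_lt
      (lt_min (abs_sub_lt_iff.mpr ⟨by linarith, by linarith⟩)
        (abs_sub_lt_iff.mpr ⟨by linarith, by linarith⟩))
      (lt_min (by linarith) (by linarith))
  obtain ⟨hL₁, hL₂⟩ := max_lt_iff.mp hlo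
  obtain ⟨hL₃, hL₄⟩ := lt_min_iff.mp hhi
  refine ⟨L, hL₁, hL₃, Fin.cases ((abs_nonneg _).trans_lt hL₁) fun k => hpos _, ?_⟩
  rw [Fin.sum_cons]
  refine Fin.cases (by simp only [Fin.cons_zero]; linarith) fun k => ?_
  simp only [Fin.cons_succ]
  linarith [hk₀ k (Finset.mem_univ _)]

theorem exists_spanning_zero_sum_with_norms {n : ℕ} (hn : 2 ≤ n) {F : Type*}
    [NormedAddCommGroup F] [InnerProductSpace ℝ F] (hF : finrank ℝ F = n) (z : Fin (n + 1) → ℝ)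
    (hpos : ∀ k, 0 < z k) (hineq : ∀ k, 2 * z k < ∑ i, z i) :
    ∃ Z : Fin (n + 1) → F, span ℝ (range Z) = ⊤ ∧ ∑ i, Z i = 0 ∧ ∀ k, ‖Z k‖ = z k := by
  induction n, hn using Nat.le_induction generalizing F with
  | base =>
    obtain ⟨w, hw, hW⟩ := exists_norm_eq_one_finrank_orthogonal hF
    obtain ⟨u, hu, hu_span⟩ := exists_norm_eq_span_singleton_eq_top hW (hpos 2)
    have hV : span ℝ (range ![u, -u]) = ⊤ :=
      eq_top_iff.mpr (hu_span ▸ span_mono (by simp))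
    have hz := Fin.sum_univ_three z
    have h₀ := hineq 0
    have h₁ := hineq 1
    have h₂ := hineq 2
    have hV₀ : ‖![u, -u] 0‖ = z 2 := hu
    obtain ⟨a, b, hspan, hsum, ha, hb⟩ := exists_split_head_of_orthogonal hw ![u, -u] hV
      (by simp) (p := z 0) (q := z 1)
      (hV₀ ▸ abs_sub_lt_iff.mpr ⟨by linarith, by linarith⟩) (by linarith)
    refine ⟨_, hspan, hsum, Fin.cases ha (Fin.cases hb fun k => ?_)⟩
    obtain rfl := Fin.fin_one_eq_zero k
    rw [Fin.cons_succ, Fin.cons_succ]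
    simpa using hu
  | succ n hn ih =>
    obtain ⟨L, hL₁, hL₂, hLpos, hLineq⟩ := exists_merged_length hn z hpos hineq
    obtain ⟨w, hw, hW⟩ := exists_norm_eq_one_finrank_orthogonal hF
    obtain ⟨V, hV, hsum, hnorm⟩ := ih hW _ hLpos hLineq
    have hV₀ : ‖V 0‖ = L := hnorm 0
    obtain ⟨a, b, hspan, hsum', ha, hb⟩ := exists_split_head_of_orthogonal hw V hV hsum
      (hV₀ ▸ hL₁) (hV₀ ▸ hL₂)
    refine ⟨_, hspan, hsum', Fin.cases ha (Fin.cases hb fun k => ?_)⟩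
    simpa using hnorm k.succ

theorem simplex_inequalities_sufficient (n : ℕ) (hn : 2 ≤ n)
    (z : Fin (n + 1) → ℝ) (hpos : ∀ k, 0 < z k)
    (hineq : ∀ k, 2 * z k < ∑ i, z i) :
    ∃ Z : Fin (n + 1) → EuclideanSpace ℝ (Fin n),
      Submodule.span ℝ (Set.range Z) = ⊤ ∧ (∑ i, Z i) = 0 ∧ ∀ k, ‖Z k‖ = z k :=
  exists_spanning_zero_sum_with_norms hn finrank_euclideanSpace_fin z hpos hineq
end

section
/- Let n ≥ 2, let M be an n × n real matrix, and let A be the n × n real matrix whose diagonal entries are all 2 and whose off-diagonal entries are all 1 (i.e., A = 1 + J where J is the all-ones matrix). Then c(c(M·A)·A) = (n+1)^(n−1) · (det M)^(n−2) · M, where c(X) denotes the cofactor matrix of X. -/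
open scoped RealInnerProductSpace BigOperators

/-- The cofactor matrix of a square matrix: the transpose of the adjugate,
so that `cof X * Xᵀ = (det X) • 1`. -/
noncomputable def cof {n : ℕ} (X : Matrix (Fin n) (Fin n) ℝ) : Matrix (Fin n) (Fin n) ℝ :=
  (Matrix.adjugate X).transpose

/-! Since `cof` is multiplicative, `c(c(MA)·A) = c(c(MA))·c(A) = det(MA)^(n-2) · M · (A·c(A))`,
and `A·c(A) = det A · 1` because `A` is symmetric; finally `det A = n + 1`
(matrix determinant lemma for `A = 1 + 𝟙𝟙ᵀ`). -/

open Matrix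

theorem Matrix.det_one_add_of_const {ι R : Type*} [Fintype ι] [DecidableEq ι] [CommRing R]
    (c : R) : (1 + of fun _ _ : ι => c).det = 1 + Fintype.card ι * c := by
  have h : (of fun _ _ : ι => c : Matrix ι ι R) =
      (replicateCol Unit (fun _ => c) : Matrix ι Unit R) *
        replicateRow Unit (fun _ : ι => (1 : R)) := by
    ext i j
    simp [Matrix.mul_apply]
  rw [h, det_one_add_replicateCol_mul_replicateRow]
  simp [dotProduct, Finset.sum_const, nsmul_eq_mul]

section Cofactor

variable {n : ℕ}

theorem cof_mul (X Y : Matrix (Fin n) (Fin n) ℝ) : cof (X * Y) = cof X * cof Y := by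
  simp only [cof, adjugate_mul_distrib, transpose_mul]

theorem cof_cof (hn : n ≠ 1) (X : Matrix (Fin n) (Fin n) ℝ) :
    cof (cof X) = X.det ^ (n - 2) • X := by
  rw [cof, cof, ← adjugate_transpose, transpose_transpose,
    adjugate_adjugate X (by simpa using hn), Fintype.card_fin]

theorem mul_cof_of_isSymm {X : Matrix (Fin n) (Fin n) ℝ} (hX : X.IsSymm) :
    X * cof X = X.det • 1 := by
  rw [cof, adjugate_transpose, hX.eq, mul_adjugate]

end Cofactor

theorem cof_cof_iteration (n : ℕ) (hn : 2 ≤ n) (M A : Matrix (Fin n) (Fin n) ℝ)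
    (hA : ∀ i j, A i j = if i = j then 2 else 1) :
    cof (cof (M * A) * A) = (((n : ℝ) + 1) ^ (n - 1) * M.det ^ (n - 2)) • M := by
  have hA_eq : A = 1 + of fun _ _ => 1 := by
    ext i j
    rw [hA, Matrix.add_apply, one_apply, of_apply]
    split_ifs <;> norm_num
  have hA_symm : A.IsSymm := by
    rw [hA_eq]
    exact isSymm_one.add (IsSymm.ext fun _ _ => rfl)
  have hA_det : A.det = n + 1 := by
    rw [hA_eq, det_one_add_of_const, Fintype.card_fin, mul_one, add_comm]
  have hpow : ((n : ℝ) + 1) ^ (n - 1) = ((n : ℝ) + 1) ^ (n - 2) * (n + 1) := by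
    rw [← pow_succ]
    congr 1
    omega
  rw [cof_mul, cof_cof (by omega), smul_mul, Matrix.mul_assoc, mul_cof_of_isSymm hA_symm,
    Matrix.mul_smul, Matrix.mul_one, smul_smul, det_mul, hA_det, mul_pow, hpow]
  congr 1
  ring
end

section
/- Let n ≥ 2 and let w₀, …, wₙ ∈ ℝⁿ satisfy w₀ + ⋯ + wₙ = 0. Define the facet normals z₀, …, zₙ by z_p := −[w₀, w₁, …, wₙ with w_p and w_{p+1} omitted] for 0 ≤ p ≤ n−1, and zₙ := (−1)^(n+1)·[w₁, …, w_{n−1}]. Then the n × n matrix whose p-th column is z_p (1 ≤ p ≤ n) equals the cofactor matrix of the n × n matrix whose k-th column is the partial sum w₁ + w₂ + ⋯ + w_k (1 ≤ k ≤ n). -/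
/-! Write `D_r` for the alternating form `v ↦ det (e_r, v)` on `(n-1)`-tuples, so that `D_r` is
the `r`-th coordinate of the vector product and the `(r, c)` cofactor of a matrix with columns
`s₀, …, s_{n-1}` is `(-1)^c D_r` of the columns with `s_c` removed. Replacing each argument by
its difference with the previous one does not change `D_r`, and turns the partial sums
`s_k = w₁ + ⋯ + w_{k+1}` into the `w`'s. For the last column this gives `zₙ` at once. For any
other column `c` the gap merges `w_{c+1} + w_{c+2}` into one argument, which by
`w₀ + ⋯ + wₙ = 0` is minus the sum of the arguments of `z_{c+1}`; moved to the front, all of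
these summands but `-w₀` cancel. -/

open scoped RealInnerProductSpace BigOperators

/-- The `n × n` matrix whose first column is `w₀` and whose remaining columns are
`w 0, …, w (n - 2)`. -/
noncomputable def colMat {n : ℕ} (w₀ : EuclideanSpace ℝ (Fin n))
    (w : Fin (n - 1) → EuclideanSpace ℝ (Fin n)) : Matrix (Fin n) (Fin n) ℝ :=
  Matrix.of fun r c =>
    if _h : (c : ℕ) = 0 then w₀ r
    else w ⟨(c : ℕ) - 1, by have := c.isLt; omega⟩ r

/-- The vector product `[w 0, …, w (n-2)]` of `n - 1` vectors in `ℝⁿ`: the unique vector `v`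
with `⟪w₀, v⟫ = det (w₀, w 0, …, w (n-2))` for all `w₀`. -/
noncomputable def vprod {n : ℕ} (w : Fin (n - 1) → EuclideanSpace ℝ (Fin n)) :
    EuclideanSpace ℝ (Fin n) :=
  (WithLp.equiv 2 (Fin n → ℝ)).symm fun i => (colMat (EuclideanSpace.single i 1) w).det

/-- The facet normal `z p` of a loop `w 0, …, w n` of `n + 1` vectors in `ℝⁿ`:
`z p = -[w 0, …, w n  with  w p, w (p+1)  omitted]` for `0 ≤ p ≤ n - 1`, and
`z n = (-1)^(n+1) • [w 1, …, w (n-1)]`. -/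
noncomputable def facet {n : ℕ} (w : Fin (n + 1) → EuclideanSpace ℝ (Fin n))
    (p : Fin (n + 1)) : EuclideanSpace ℝ (Fin n) :=
  if _h : (p : ℕ) < n then
    - vprod (fun j : Fin (n - 1) =>
        if (j : ℕ) < (p : ℕ) then w ⟨(j : ℕ), by have := j.isLt; omega⟩
        else w ⟨(j : ℕ) + 2, by have := j.isLt; omega⟩)
  else
    ((-1 : ℝ) ^ (n + 1)) • vprod (fun j : Fin (n - 1) => w ⟨(j : ℕ) + 1, by have := j.isLt; omega⟩)

def successiveDiff {M : Type*} [AddGroup M] {n : ℕ} (x : Fin n → M) (i : Fin n) : M :=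
  x i - if h : (i : ℕ) = 0 then 0 else x ⟨i - 1, by omega⟩

theorem Fin.val_succAbove {n : ℕ} (p : Fin (n + 1)) (i : Fin n) :
    (p.succAbove i : ℕ) = if (i : ℕ) < p then (i : ℕ) else (i : ℕ) + 1 := by
  rw [Fin.succAbove]
  split_ifs <;> simp_all [Fin.lt_def]

theorem Fin.sum_univ_eq_add_add_sum_removeNth {M : Type*} [AddCommMonoid M] {n : ℕ}
    (w : Fin (n + 2) → M) (p : Fin (n + 1)) :
    ∑ i, w i = w p.castSucc + w p.succ + ∑ j, p.removeNth (p.castSucc.removeNth w) j := by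
  rw [Fin.sum_univ_succAbove w p.castSucc, Fin.sum_univ_succAbove _ p, add_assoc]
  simp [Fin.removeNth]

section successiveDiff
variable {M : Type*} [AddCommGroup M]

theorem successiveDiff_eq_sum_smul {R : Type*} [CommRing R] [Module R M] {n : ℕ}
    (x : Fin n → M) (i : Fin n) :
    successiveDiff x i =
      ∑ j, (if j = i then (1 : R) else if (j : ℕ) + 1 = i then -1 else 0) • x j := by
  have hsplit (j : Fin n) : (if j = i then (1 : R) else if (j : ℕ) + 1 = i then -1 else 0) • x j
      = (if j = i then x j else 0) - if (j : ℕ) + 1 = i then x j else 0 := by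
    by_cases h : j = i
    · subst h; simp
    · simp only [h, if_false]; split_ifs <;> simp
  simp only [hsplit, Finset.sum_sub_distrib, Finset.sum_ite_eq', Finset.mem_univ, if_true,
    successiveDiff]
  congr 1
  split_ifs with hi
  · exact (Finset.sum_eq_zero fun j _ => if_neg (by omega)).symm
  · rw [Finset.sum_eq_single_of_mem ⟨i - 1, by omega⟩ (Finset.mem_univ _) fun j _ hj => if_neg ?_]
    · simp only [if_pos (show (i : ℕ) - 1 + 1 = i by omega)]
    · rw [Ne, Fin.ext_iff] at hj; simp only at hj; omega

theorem successiveDiff_sum_Icc {m : ℕ} (w : Fin (m + 2) → M) :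
    successiveDiff (fun c : Fin (m + 1) => ∑ j ∈ Finset.Icc 1 c.succ, w j) = Fin.tail w := by
  have hIcc (k : Fin (m + 2)) : ∑ j ∈ Finset.Icc 1 k, w j =
      ∑ j : Fin (m + 2), if 1 ≤ (j : ℕ) ∧ (j : ℕ) ≤ k then w j else 0 := by
    rw [← Finset.sum_filter]
    congr 1
    ext j
    simp only [Finset.mem_Icc, Finset.mem_filter, Finset.mem_univ, true_and, Fin.le_def,
      Fin.val_one]
  ext c
  have hterm (j : Fin (m + 2)) : ((if 1 ≤ (j : ℕ) ∧ (j : ℕ) ≤ c + 1 then w j else 0) -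
      if (c : ℕ) = 0 then 0 else if 1 ≤ (j : ℕ) ∧ (j : ℕ) ≤ c then w j else 0) =
      if j = c.succ then w j else 0 := by
    simp only [Fin.ext_iff, Fin.val_succ]
    split_ifs <;> first | omega | simp
  calc successiveDiff _ c
      = ∑ j : Fin (m + 2), ((if 1 ≤ (j : ℕ) ∧ (j : ℕ) ≤ c + 1 then w j else 0) -
          if (c : ℕ) = 0 then 0 else if 1 ≤ (j : ℕ) ∧ (j : ℕ) ≤ c then w j else 0) := by
        by_cases hc : (c : ℕ) = 0
        · simp [successiveDiff, hIcc, hc]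
        · simp [successiveDiff, hIcc, hc, Finset.sum_sub_distrib,
            Nat.sub_add_cancel (Nat.pos_of_ne_zero hc)]
    _ = Fin.tail w c := by simp only [hterm, Finset.sum_ite_eq', Finset.mem_univ, if_true]; rfl

theorem successiveDiff_init {n : ℕ} (x : Fin (n + 1) → M) :
    successiveDiff (Fin.init x) = Fin.init (successiveDiff x) := by
  ext i
  simp [successiveDiff, Fin.init]

theorem successiveDiff_removeNth_castSucc_self {n : ℕ} (x : Fin (n + 2) → M) (c : Fin (n + 1)) :
    successiveDiff (c.castSucc.removeNth x) c =
      successiveDiff x c.castSucc + successiveDiff x c.succ := by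
  have hprev (h : (c : ℕ) ≠ 0) : c.castSucc.succAbove ⟨c - 1, by omega⟩ = ⟨c - 1, by omega⟩ :=
    Fin.ext (by rw [Fin.val_succAbove, if_pos (by simp only [Fin.val_castSucc]; omega)])
  have hself : (⟨c, by omega⟩ : Fin (n + 2)) = c.castSucc := rfl
  simp only [successiveDiff, Fin.removeNth, Fin.succAbove_castSucc_self, Fin.val_succ,
    Fin.val_castSucc, Nat.add_sub_cancel, Nat.add_one_ne_zero, dite_false, hself]
  split_ifs with h
  · abel
  · rw [hprev h]; abel

theorem removeNth_successiveDiff_removeNth_castSucc {n : ℕ} (x : Fin (n + 2) → M)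
    (c : Fin (n + 1)) :
    c.removeNth (successiveDiff (c.castSucc.removeNth x)) =
      c.removeNth (c.castSucc.removeNth (successiveDiff x)) := by
  ext j
  simp only [successiveDiff, Fin.removeNth]
  congr 1
  have hP := Fin.val_succAbove c.castSucc
  have hQ := Fin.val_succAbove c j
  simp only [Fin.val_castSucc] at hP
  split_ifs with h1 h2 h2
  · rfl
  · rw [hP, hQ] at h2; rw [hQ] at h1; split_ifs at h1 h2; omega
  · rw [hP, hQ] at h2; rw [hQ] at h1; split_ifs at h1 h2; omega
  · congr 1
    ext
    rw [hP]
    simp only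
    rw [hP, hQ]
    split_ifs <;> omega

end successiveDiff

namespace AlternatingMap

variable {R M N : Type*} [CommRing R] [AddCommGroup M] [Module R M] [AddCommGroup N] [Module R N]

theorem map_cons_neg_sum_tail {n : ℕ} (f : M [⋀^Fin (n + 1)]→ₗ[R] N) (v : Fin (n + 1) → M) :
    f (Fin.cons (-∑ i, v i) (Fin.tail v)) = -f v := by
  have hdup (j : Fin n) : f (Function.update v 0 (v j.succ)) = 0 :=
    f.map_eq_zero_of_eq _ (i := 0) (j := j.succ) (by simp) (Fin.succ_ne_zero j).symm
  rw [← Fin.update_cons_zero (v 0), Fin.cons_self_tail, f.map_update_neg, f.map_update_sum,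
    Fin.sum_univ_succ]
  simp [hdup]

theorem map_sum_smul_eq_det_mul {ι : Type*} [Fintype ι] [DecidableEq ι] (f : M [⋀^ι]→ₗ[R] R)
    (A : Matrix ι ι R) (v : ι → M) :
    f (fun i => ∑ j, A i j • v j) = A.det * f v := by
  -- as a function of the rows of `A`, the left side is an alternating form on `ι → R`
  have h := (f.compLinearMap (Fintype.linearCombination R v)).eq_smul_basis_det (Pi.basisFun R ι)
  rw [Pi.basisFun_det] at h
  have := congr($h fun i => A i)
  simp only [compLinearMap_apply, Fintype.linearCombination_apply, Pi.basisFun_apply, smul_apply,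
    Pi.single_apply, ite_smul, one_smul, zero_smul, Finset.sum_ite_eq', Finset.mem_univ, if_true,
    smul_eq_mul] at this
  rw [this, mul_comm]
  rfl

theorem map_successiveDiff {n : ℕ} (f : M [⋀^Fin n]→ₗ[R] R) (x : Fin n → M) :
    f (successiveDiff x) = f x := by
  set A : Matrix (Fin n) (Fin n) R :=
    .of fun i j => if j = i then 1 else if (j : ℕ) + 1 = i then -1 else 0
  have hA : A.IsLowerTriangular := fun i j (hij : i < j) => by
    have : (i : ℕ) < j := hij
    simp only [A, Matrix.of_apply]
    rw [if_neg hij.ne', if_neg (by omega)]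
  have hdet : A.det = 1 := by simp [Matrix.det_of_isLowerTriangular A hA, A]
  have hx : successiveDiff x = fun i => ∑ j, A i j • x j :=
    funext (successiveDiff_eq_sum_smul x)
  rw [hx, map_sum_smul_eq_det_mul, hdet, one_mul]

theorem neg_one_pow_mul_map_removeNth_castSucc {k : ℕ} (f : M [⋀^Fin (k + 1)]→ₗ[R] R)
    (w : Fin (k + 3) → M) (hw : ∑ i, w i = 0) (s : Fin (k + 2) → M)
    (hs : successiveDiff s = Fin.tail w) (c : Fin (k + 1)) :
    (-1) ^ (c : ℕ) * f (c.castSucc.removeNth s) =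
      -f (c.succ.removeNth (c.succ.castSucc.removeNth w)) := by
  set u := c.succ.removeNth (c.succ.castSucc.removeNth w)
  have hdc : successiveDiff (c.castSucc.removeNth s) c = -∑ j, u j := by
    rw [successiveDiff_removeNth_castSucc_self, hs, eq_neg_iff_add_eq_zero, ← hw,
      Fin.sum_univ_eq_add_add_sum_removeNth w c.succ]
    rfl
  have hdrest : c.removeNth (successiveDiff (c.castSucc.removeNth s)) = Fin.tail u := by
    rw [removeNth_successiveDiff_removeNth_castSucc, hs]
    ext j
    simp only [Fin.removeNth, Fin.tail, u]
    congr 1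
    ext
    simp only [Fin.val_succ, Fin.val_succAbove, Fin.val_castSucc]
    split_ifs <;> omega
  set d := successiveDiff (c.castSucc.removeNth s)
  have := f.neg_one_pow_smul_map_insertNth c (d c) (c.removeNth d)
  rw [Fin.insertNth_self_removeNth, hdc, hdrest, zsmul_eq_mul] at this
  rw [← map_successiveDiff f, ← map_cons_neg_sum_tail f u]
  exact_mod_cast this

end AlternatingMap

noncomputable abbrev stdDet (n : ℕ) : EuclideanSpace ℝ (Fin n) [⋀^Fin n]→ₗ[ℝ] ℝ :=
  (EuclideanSpace.basisFun (Fin n) ℝ).toBasis.det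

theorem stdDet_apply {n : ℕ} (v : Fin n → EuclideanSpace ℝ (Fin n)) :
    stdDet n v = (Matrix.of fun i j => v j i).det := by
  rw [Module.Basis.det_apply]
  rfl

theorem det_colMat {m : ℕ} (u : EuclideanSpace ℝ (Fin (m + 1)))
    (v : Fin m → EuclideanSpace ℝ (Fin (m + 1))) :
    (colMat u v).det = stdDet (m + 1) (Fin.cons u v) := by
  rw [stdDet_apply]
  congr 1
  ext r c
  cases c using Fin.cases <;> simp [colMat]

theorem vprod_apply {m : ℕ} (v : Fin m → EuclideanSpace ℝ (Fin (m + 1))) (r : Fin (m + 1)) :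
    vprod v r = (stdDet (m + 1)).curryLeft (EuclideanSpace.single r 1) v := by
  simp [vprod, det_colMat]
  rfl

theorem cof_of_apply {m : ℕ} (s : Fin (m + 1) → EuclideanSpace ℝ (Fin (m + 1)))
    (r c : Fin (m + 1)) :
    cof (Matrix.of fun r c => s c r) r c =
      (-1) ^ (c : ℕ) * (stdDet (m + 1)).curryLeft (EuclideanSpace.single r 1) (c.removeNth s) := by
  have hupd : ((Matrix.of fun r c => s c r).transpose.updateRow c (Pi.single r 1)).transpose =
      Matrix.of fun i j => Function.update s c (EuclideanSpace.single r 1) j i := by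
    ext i j
    rcases eq_or_ne j c with rfl | hj <;> simp [Matrix.updateRow_apply, Pi.single_apply, *]
  rw [cof, Matrix.adjugate_transpose, Matrix.adjugate_apply, ← Matrix.det_transpose, hupd,
    ← stdDet_apply, ← Fin.insertNth_removeNth, AlternatingMap.map_insertNth, zsmul_eq_mul]
  push_cast
  rfl

theorem facet_last {m : ℕ} (w : Fin (m + 2) → EuclideanSpace ℝ (Fin (m + 1))) :
    facet w (Fin.last (m + 1)) = (-1 : ℝ) ^ (m + 2) • vprod (Fin.init (Fin.tail w)) := by
  rw [facet, dif_neg (by simp)]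
  rfl

theorem facet_succ_castSucc {k : ℕ} (w : Fin (k + 3) → EuclideanSpace ℝ (Fin (k + 2)))
    (c : Fin (k + 1)) :
    facet w c.succ.castSucc = -vprod (c.succ.removeNth (c.succ.castSucc.removeNth w)) := by
  rw [facet, dif_pos (by simp; omega)]
  congr 2
  ext j : 1
  simp only [Fin.removeNth]
  split_ifs with h <;> congr 1 <;> ext <;>
    simp only [Fin.val_succAbove, Fin.val_succ, Fin.val_castSucc] at h ⊢ <;> split_ifs <;> omega

theorem facet_matrix_eq_cof_of_partial_sums_general (n : ℕ)
    (w : Fin (n + 1) → EuclideanSpace ℝ (Fin n)) (hw : (∑ i, w i) = 0) :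
    (Matrix.of fun r (c : Fin n) => facet w c.succ r) =
      cof (Matrix.of fun r (c : Fin n) => ∑ j ∈ Finset.Icc (1 : Fin (n + 1)) c.succ, w j r) := by
  rcases n with _ | m
  · exact Subsingleton.elim _ _
  set s : Fin (m + 1) → EuclideanSpace ℝ (Fin (m + 1)) :=
    fun c => ∑ j ∈ Finset.Icc 1 c.succ, w j
  have hS : (Matrix.of fun r (c : Fin (m + 1)) => ∑ j ∈ Finset.Icc 1 c.succ, w j r) =
      Matrix.of fun r c => s c r := by
    ext; simp [s]
  have hs : successiveDiff s = Fin.tail w := successiveDiff_sum_Icc w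
  ext r c
  rw [hS, cof_of_apply, Matrix.of_apply]
  set f := (stdDet (m + 1)).curryLeft (EuclideanSpace.single r 1)
  induction c using Fin.lastCases with
  | last =>
    rw [Fin.succ_last, facet_last, PiLp.smul_apply, vprod_apply, Fin.removeNth_last, ← hs,
      ← successiveDiff_init, AlternatingMap.map_successiveDiff, smul_eq_mul, Fin.val_last]
    ring
  | cast c =>
    rcases m with _ | k
    · exact c.elim0
    rw [Fin.succ_castSucc, facet_succ_castSucc, PiLp.neg_apply, vprod_apply, Fin.val_castSucc,
      AlternatingMap.neg_one_pow_mul_map_removeNth_castSucc f w hw s hs c]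

theorem facet_matrix_eq_cof_of_partial_sums (n : ℕ) (hn : 2 ≤ n)
    (w : Fin (n + 1) → EuclideanSpace ℝ (Fin n)) (hw : (∑ i, w i) = 0) :
    (Matrix.of fun r (c : Fin n) => facet w c.succ r) =
      cof (Matrix.of fun r (c : Fin n) => ∑ j ∈ Finset.Icc (1 : Fin (n + 1)) c.succ, w j r) :=
  facet_matrix_eq_cof_of_partial_sums_general n w hw
end

section
/- Let n ≥ 2 and let v₀, …, vₙ ∈ ℝⁿ satisfy v₀ + ⋯ + vₙ = 0. Define the edge vectors w₀ := v₀ − vₙ and w_i := v_i − v_{i−1} for 1 ≤ i ≤ n. Then det of the n × n matrix with columns w₁, …, wₙ equals (n+1) times det of the n × n matrix with columns v₁, …, vₙ. -/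
/-!
Summing the first `k` edge vectors telescopes to `v k - v 0 = v k + (v 1 + ⋯ + v n)`; this is a
unitriangular column operation, so `det W = det (V (1 + 𝟙𝟙ᵀ))`, and `det (1 + 𝟙𝟙ᵀ) = n + 1` by the
matrix determinant lemma.
-/

open Matrix Finset

section

variable {R : Type*} [CommRing R] {n : ℕ}

def upperTriangularOnes (n : ℕ) : Matrix (Fin n) (Fin n) R :=
  of fun i j => if i ≤ j then 1 else 0

theorem det_upperTriangularOnes :
    (upperTriangularOnes n : Matrix (Fin n) (Fin n) R).det = 1 := by
  rw [det_of_isUpperTriangular]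
  · simp [upperTriangularOnes]
  · intro i j (hji : j < i)
    simp [upperTriangularOnes, not_le.2 hji]

theorem of_succ_sub_castSucc_mul_upperTriangularOnes (u : Fin (n + 1) → Fin n → R) :
    (of fun r c => u c.succ r - u c.castSucc r) * upperTriangularOnes n =
      of fun r c => u c.succ r - u 0 r := by
  ext r c
  simp only [mul_apply, of_apply, upperTriangularOnes, mul_ite, mul_one, mul_zero]
  rw [← sum_filter, filter_ge_eq_Iic]
  exact Fin.sum_Iic_sub c (fun i => u i r)

theorem det_of_succ_sub_castSucc (u : Fin (n + 1) → Fin n → R) :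
    (of fun r c => u c.succ r - u c.castSucc r).det = (of fun r c => u c.succ r - u 0 r).det := by
  rw [← of_succ_sub_castSucc_mul_upperTriangularOnes, det_mul, det_upperTriangularOnes, mul_one]

end

theorem det_of_add_sum_row {R m : Type*} [CommRing R] [Fintype m] [DecidableEq m]
    (V : Matrix m m R) :
    (of fun r c => V r c + ∑ j, V r j).det = (Fintype.card m + 1) * V.det := by
  have hfactor : V * (1 + replicateCol Unit (1 : m → R) * replicateRow Unit (1 : m → R)) =
      of fun r c => V r c + ∑ j, V r j := by
    ext r c
    simp [mul_add, mul_apply, one_apply, sum_add_distrib, add_comm]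
  rw [← hfactor, det_mul, det_one_add_replicateCol_mul_replicateRow]
  simp [dotProduct, add_comm, mul_comm]

theorem det_edge_matrix_general (n : ℕ)
    (v : Fin (n + 1) → EuclideanSpace ℝ (Fin n)) (hv : (∑ i, v i) = 0)
    (w : Fin (n + 1) → EuclideanSpace ℝ (Fin n))
    (hwi : ∀ i : Fin (n + 1), (i : ℕ) ≠ 0 → w i = v i - v (i - 1)) :
    (Matrix.of fun r (c : Fin n) => w c.succ r).det =
      ((n : ℝ) + 1) * (Matrix.of fun r (c : Fin n) => v c.succ r).det := by
  have hw : (of fun r (c : Fin n) => w c.succ r) = of fun r c => v c.succ r - v c.castSucc r := by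
    ext r c
    have hpred : c.succ - 1 = c.castSucc := by rw [← Fin.coeSucc_eq_succ, add_sub_cancel_right]
    simp [hwi c.succ (by simp), hpred]
  have hv0 : ∀ r, -v 0 r = ∑ j : Fin n, v j.succ r := by
    intro r
    rw [neg_eq_iff_add_eq_zero]
    simpa [Fin.sum_univ_succ] using congrArg (· r) hv
  rw [hw, det_of_succ_sub_castSucc (fun i r => v i r)]
  simpa [sub_eq_add_neg, hv0] using det_of_add_sum_row (of fun r (c : Fin n) => v c.succ r)

theorem det_edge_matrix (n : ℕ) (hn : 2 ≤ n)
    (v : Fin (n + 1) → EuclideanSpace ℝ (Fin n)) (hv : (∑ i, v i) = 0)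
    (w : Fin (n + 1) → EuclideanSpace ℝ (Fin n))
    (hw0 : w 0 = v 0 - v (Fin.last n))
    (hwi : ∀ i : Fin (n + 1), (i : ℕ) ≠ 0 → w i = v i - v (i - 1)) :
    (Matrix.of fun r (c : Fin n) => w c.succ r).det =
      ((n : ℝ) + 1) * (Matrix.of fun r (c : Fin n) => v c.succ r).det :=
  det_edge_matrix_general n v hv w hwi
end

section
/- Let n ≥ 2 and let z₀ ≤ z₁ ≤ ⋯ ≤ zₙ be real numbers with 0 < z₀ and 2·zₙ < z₀ + ⋯ + zₙ. Then there exist points P₀, …, P_{n−1} ∈ ℝⁿ such that, setting Pₙ := 0: for each k with 0 ≤ k ≤ n−1, P_k lies in the linear span of the first k+1 standard basis vectors e₁, …, e_{k+1} but not in the linear span of e₁, …, e_k; ‖P₀ − Pₙ‖ = z₀; and ‖P_k − P_{k−1}‖ = z_k for every k with 1 ≤ k ≤ n. -/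
/-!
Choose radii `r₀ = z₀, r₁, …, r_{n-1} = zₙ` with `|rₖ - rₖ₋₁| < zₖ < rₖ + rₖ₋₁`, and build the
points one at a time with `‖Pₖ‖ = rₖ`: `Pₖ` is the apex of the nondegenerate triangle with base
`0, Pₖ₋₁` and sides `rₖ`, `zₖ`, erected in the fresh direction `e_{k+1}`, so that its
`(k+1)`-st coordinate is positive. The last side `Pₙ₋₁, Pₙ = 0` then has length `rₙ₋₁ = zₙ`.
Suitable radii are `rₖ = min (z₀ + ⋯ + zₖ - k ε) (zₙ + (n - 1 - k) ε)` for a small `ε > 0`: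
the two branches move by `zₖ - ε` and `-ε` per step, and `2 zₙ < ∑ zᵢ` leaves room for
`ε`.
-/

open scoped RealInnerProductSpace
open Finset Submodule

section TriangleApex

variable {E : Type*} [NormedAddCommGroup E] [InnerProductSpace ℝ E]

/-- By the law of cosines, the projection onto the base of the side of length `r` in a triangle
with base `s` and other side `t`. -/
noncomputable def triangleFoot (s r t : ℝ) : ℝ := (s ^ 2 + r ^ 2 - t ^ 2) / (2 * s)

noncomputable def triangleApex (v u : E) (r t : ℝ) : E :=
  (triangleFoot ‖v‖ r t / ‖v‖) • v + √(r ^ 2 - triangleFoot ‖v‖ r t ^ 2) • u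

noncomputable def apexChain (e : ℕ → E) (r z : ℕ → ℝ) : ℕ → E
  | 0 => r 0 • e 0
  | k + 1 => triangleApex (apexChain e r z k) (e (k + 1)) (r (k + 1)) (z (k + 1))

theorem triangleFoot_sq_lt {s r t : ℝ} (hs : 0 < s) (h₁ : |r - s| < t) (h₂ : t < r + s) :
    triangleFoot s r t ^ 2 < r ^ 2 := by
  obtain ⟨hlo, hhi⟩ := abs_lt.mp h₁
  have key : r ^ 2 - triangleFoot s r t ^ 2
      = ((r + s) ^ 2 - t ^ 2) * (t ^ 2 - (r - s) ^ 2) / (2 * s) ^ 2 := by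
    unfold triangleFoot
    field_simp
    ring
  have : 0 < r ^ 2 - triangleFoot s r t ^ 2 := by
    rw [key]
    have : 0 < (r + s) ^ 2 - t ^ 2 := by nlinarith
    have : 0 < t ^ 2 - (r - s) ^ 2 := by nlinarith
    positivity
  linarith

theorem norm_smul_add_smul_sq {v u : E} (hu : ‖u‖ = 1) (hvu : ⟪v, u⟫ = 0) (a b : ℝ) :
    ‖a • v + b • u‖ ^ 2 = a ^ 2 * ‖v‖ ^ 2 + b ^ 2 := by
  have h : ⟪a • v, b • u⟫ = 0 := by simp [inner_smul_left, inner_smul_right, hvu]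
  rw [sq, norm_add_sq_eq_norm_sq_add_norm_sq_of_inner_eq_zero _ _ h, norm_smul, norm_smul, hu]
  simp only [Real.norm_eq_abs]
  nlinarith [sq_abs a, sq_abs b]

variable {v u : E} (hv : v ≠ 0) (hu : ‖u‖ = 1) (hvu : ⟪v, u⟫ = 0) {r t : ℝ}
  (h₁ : |r - ‖v‖| < t) (h₂ : t < r + ‖v‖)
include hv hu hvu h₁ h₂

theorem norm_triangleApex : ‖triangleApex v u r t‖ = r := by
  have hlt := triangleFoot_sq_lt (norm_pos_iff.mpr hv) h₁ h₂
  have hr : 0 ≤ r := by linarith [(abs_lt.mp h₁).1]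
  rw [← sq_eq_sq₀ (norm_nonneg _) hr, triangleApex, norm_smul_add_smul_sq hu hvu,
    Real.sq_sqrt (by linarith)]
  field_simp
  ring

theorem norm_triangleApex_sub : ‖triangleApex v u r t - v‖ = t := by
  have hlt := triangleFoot_sq_lt (norm_pos_iff.mpr hv) h₁ h₂
  have ht : 0 ≤ t := (abs_nonneg _).trans h₁.le
  have hsub : triangleApex v u r t - v
      = (triangleFoot ‖v‖ r t / ‖v‖ - 1) • v + √(r ^ 2 - triangleFoot ‖v‖ r t ^ 2) • u := by
    rw [triangleApex, sub_smul, one_smul]; abel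
  rw [← sq_eq_sq₀ (norm_nonneg _) ht, hsub, norm_smul_add_smul_sq hu hvu,
    Real.sq_sqrt (by linarith), triangleFoot]
  field_simp
  ring

end TriangleApex

def coordSpan (n k : ℕ) : Submodule ℝ (EuclideanSpace ℝ (Fin n)) :=
  span ℝ ((fun i : Fin n => EuclideanSpace.single i (1 : ℝ)) '' {i | (i : ℕ) < k})

theorem mem_coordSpan_iff {n k : ℕ} {x : EuclideanSpace ℝ (Fin n)} :
    x ∈ coordSpan n k ↔ ∀ i : Fin n, k ≤ i → x i = 0 := by
  have h := (EuclideanSpace.basisFun (Fin n) ℝ).toBasis.mem_span_image (m := x)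
    (s := {i | (i : ℕ) < k})
  simp only [OrthonormalBasis.coe_toBasis, EuclideanSpace.basisFun_apply] at h
  rw [coordSpan, h]
  simp [Set.subset_def, not_imp_comm]

theorem triangleApex_single_spec {n : ℕ} {j : Fin n} {v : EuclideanSpace ℝ (Fin n)} (hv : v ≠ 0)
    (hvj : v ∈ coordSpan n j) {r t : ℝ} (h₁ : |r - ‖v‖| < t) (h₂ : t < r + ‖v‖) :
    ‖triangleApex v (EuclideanSpace.single j 1) r t‖ = r ∧
    ‖triangleApex v (EuclideanSpace.single j 1) r t - v‖ = t ∧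
    triangleApex v (EuclideanSpace.single j 1) r t ∈ coordSpan n (j + 1) ∧
    triangleApex v (EuclideanSpace.single j 1) r t ∉ coordSpan n j := by
  have hu : ‖EuclideanSpace.single j (1 : ℝ)‖ = 1 := by simp
  have hvj' : v j = 0 := mem_coordSpan_iff.mp hvj j le_rfl
  have hvu : ⟪v, EuclideanSpace.single j 1⟫ = 0 := by
    simp [EuclideanSpace.inner_single_right, hvj']
  have hb : 0 < √(r ^ 2 - triangleFoot ‖v‖ r t ^ 2) :=
    Real.sqrt_pos.mpr (sub_pos.mpr (triangleFoot_sq_lt (norm_pos_iff.mpr hv) h₁ h₂))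
  refine ⟨norm_triangleApex hv hu hvu h₁ h₂, norm_triangleApex_sub hv hu hvu h₁ h₂, ?_, ?_⟩
  · refine mem_coordSpan_iff.mpr fun i hi => ?_
    have hij : i ≠ j := by rintro rfl; omega
    simp [triangleApex, mem_coordSpan_iff.mp hvj i (by omega), hij]
  · intro h
    have hj := mem_coordSpan_iff.mp h j le_rfl
    simp only [triangleApex, PiLp.add_apply, PiLp.smul_apply, hvj', smul_eq_mul, mul_zero,
      PiLp.single_apply, if_true, mul_one, zero_add] at hj
    exact hb.ne' hj

/-- The standard basis vector `e_j` of `ℝⁿ`, extended by `0` to indices `j ≥ n`. -/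
noncomputable def stdBasisVec (n j : ℕ) : EuclideanSpace ℝ (Fin n) :=
  if h : j < n then EuclideanSpace.single ⟨j, h⟩ 1 else 0

section Chain

variable {n : ℕ} {r z : ℕ → ℝ}
  (hrz : ∀ k, k + 1 < n → |r (k + 1) - r k| < z (k + 1) ∧ z (k + 1) < r (k + 1) + r k)
include hrz

theorem apexChain_succ_spec {k : ℕ} (hk : k + 1 < n)
    (hnorm : ‖apexChain (stdBasisVec n) r z k‖ = r k)
    (hmem : apexChain (stdBasisVec n) r z k ∈ coordSpan n (k + 1))
    (hnot : apexChain (stdBasisVec n) r z k ∉ coordSpan n k) :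
    ‖apexChain (stdBasisVec n) r z (k + 1)‖ = r (k + 1) ∧
    ‖apexChain (stdBasisVec n) r z (k + 1) - apexChain (stdBasisVec n) r z k‖ = z (k + 1) ∧
    apexChain (stdBasisVec n) r z (k + 1) ∈ coordSpan n (k + 2) ∧
    apexChain (stdBasisVec n) r z (k + 1) ∉ coordSpan n (k + 1) := by
  obtain ⟨h₁, h₂⟩ := hrz k hk
  rw [← hnorm] at h₁ h₂
  rw [apexChain, stdBasisVec, dif_pos hk]
  exact triangleApex_single_spec (j := ⟨k + 1, hk⟩)
    (ne_of_mem_of_not_mem (zero_mem _) hnot).symm hmem h₁ h₂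

theorem apexChain_spec (hr0 : 0 < r 0) {k : ℕ} (hk : k < n) :
    ‖apexChain (stdBasisVec n) r z k‖ = r k ∧
    apexChain (stdBasisVec n) r z k ∈ coordSpan n (k + 1) ∧
    apexChain (stdBasisVec n) r z k ∉ coordSpan n k := by
  induction k with
  | zero =>
    have hP : apexChain (stdBasisVec n) r z 0 = r 0 • EuclideanSpace.single ⟨0, hk⟩ 1 := by
      simp [apexChain, stdBasisVec, hk]
    refine ⟨by simp [hP, norm_smul, hr0.le], mem_coordSpan_iff.mpr fun i hi => ?_, fun h => ?_⟩
    · have : i ≠ ⟨0, hk⟩ := by rintro rfl; simp at hi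
      simp [hP, this]
    · simpa [hP, hr0.ne'] using mem_coordSpan_iff.mp h ⟨0, hk⟩ le_rfl
  | succ k ih =>
    obtain ⟨hnorm, hmem, hnot⟩ := ih (by omega)
    obtain ⟨hnorm', -, hmem', hnot'⟩ := apexChain_succ_spec hrz hk hnorm hmem hnot
    exact ⟨hnorm', hmem', hnot'⟩

theorem norm_apexChain_succ_sub (hr0 : 0 < r 0) {k : ℕ} (hk : k + 1 < n) :
    ‖apexChain (stdBasisVec n) r z (k + 1) - apexChain (stdBasisVec n) r z k‖ = z (k + 1) :=
  have ⟨hnorm, hmem, hnot⟩ := apexChain_spec hrz hr0 (k := k) (by omega)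
  (apexChain_succ_spec hrz hk hnorm hmem hnot).2.1

end Chain

theorem exists_triangle_radii_of_slack {z : ℕ → ℝ} (hz : Monotone z) {m : ℕ} {ε : ℝ}
    (hε : 0 < ε) (hεz : ε < z 0) (hεm : m * ε ≤ ∑ i ∈ range (m + 1), z i - z (m + 1)) :
    ∃ r : ℕ → ℝ, r 0 = z 0 ∧ r m = z (m + 1) ∧
      ∀ k < m, |r (k + 1) - r k| < z (k + 1) ∧ z (k + 1) < r (k + 1) + r k := by
  set f : ℕ → ℝ := fun k => ∑ i ∈ range (k + 1), z i - k * ε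
  set g : ℕ → ℝ := fun k => z (m + 1) + (m - k) * ε
  have hf : ∀ k, z 0 ≤ f k := fun k => by
    have h := card_nsmul_le_sum (range (k + 1)) z (z 0) fun i _ => hz (Nat.zero_le i)
    simp only [card_range, nsmul_eq_mul, Nat.cast_succ] at h
    have : k * ε ≤ k * z 0 := by gcongr
    simp only [f]; linarith
  have hg : ∀ k ≤ m, z (m + 1) ≤ g k := fun k hk => by
    have : (k : ℝ) ≤ m := by exact_mod_cast hk
    simp only [g]; nlinarith
  have hf_succ : ∀ k, f (k + 1) = f k + z (k + 1) - ε := fun k => by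
    simp only [f, sum_range_succ _ (k + 1)]; push_cast; ring
  have hg_succ : ∀ k, g (k + 1) = g k - ε := fun k => by simp only [g]; push_cast; ring
  have hz0m : z 0 ≤ z (m + 1) := hz (Nat.zero_le _)
  refine ⟨fun k => min (f k) (g k), ?_, ?_, fun k hk => ⟨?_, ?_⟩⟩
  · have hf0 : f 0 = z 0 := by simp [f]
    show min (f 0) (g 0) = z 0
    rw [hf0, min_eq_left (hz0m.trans (hg 0 (Nat.zero_le m)))]
  · have hgm : g m = z (m + 1) := by simp [g]
    show min (f m) (g m) = z (m + 1)
    rw [hgm, min_eq_right (by simp only [f]; linarith)]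
  · have hzk : z 0 ≤ z (k + 1) := hz (Nat.zero_le _)
    calc |min (f (k + 1)) (g (k + 1)) - min (f k) (g k)|
        ≤ max |f (k + 1) - f k| |g (k + 1) - g k| := abs_min_sub_min_le_max _ _ _ _
      _ < z (k + 1) := by
        rw [hf_succ, hg_succ, max_lt_iff, abs_lt, abs_lt]
        refine ⟨⟨?_, ?_⟩, ?_, ?_⟩ <;> linarith
  · have hzk : z (k + 1) ≤ z (m + 1) := hz (by omega)
    have hrk : z 0 ≤ min (f k) (g k) := le_min (hf k) (hz0m.trans (hg k hk.le))
    have : z (k + 1) - min (f k) (g k) < min (f (k + 1)) (g (k + 1)) := by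
      rw [lt_min_iff, hf_succ, hg_succ]
      constructor <;> linarith [hf k, hg (k + 1) hk, hg_succ k]
    linarith

theorem exists_triangle_radii {z : ℕ → ℝ} (hz0 : 0 < z 0) (hz : Monotone z) {m : ℕ}
    (hm : z (m + 1) < ∑ i ∈ range (m + 1), z i) :
    ∃ r : ℕ → ℝ, r 0 = z 0 ∧ r m = z (m + 1) ∧
      ∀ k < m, |r (k + 1) - r k| < z (k + 1) ∧ z (k + 1) < r (k + 1) + r k := by
  set δ := ∑ i ∈ range (m + 1), z i - z (m + 1)
  have hδ : 0 < δ := sub_pos.mpr hm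
  refine exists_triangle_radii_of_slack hz (ε := min (z 0 / 2) (δ / (m + 1))) (by positivity)
    (by simp [hz0]) ?_
  calc m * min (z 0 / 2) (δ / (m + 1)) ≤ m * (δ / (m + 1)) := by gcongr; exact min_le_right _ _
    _ ≤ δ := by rw [mul_div_assoc']; exact div_le_of_le_mul₀ (by positivity) hδ.le (by nlinarith)

theorem exists_closed_chain {m : ℕ} {z : ℕ → ℝ} (hz0 : 0 < z 0) (hz : Monotone z)
    (hm : z (m + 1) < ∑ i ∈ range (m + 1), z i) :
    ∃ Q : ℕ → EuclideanSpace ℝ (Fin (m + 1)), Q (m + 1) = 0 ∧ ‖Q 0‖ = z 0 ∧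
      (∀ k < m + 1, Q k ∈ coordSpan (m + 1) (k + 1) ∧ Q k ∉ coordSpan (m + 1) k) ∧
      ∀ k ≤ m, ‖Q (k + 1) - Q k‖ = z (k + 1) := by
  obtain ⟨r, hr0, hrm, hrz⟩ := exists_triangle_radii hz0 hz hm
  have hr0' : 0 < r 0 := hr0 ▸ hz0
  have hrz' : ∀ k, k + 1 < m + 1 → |r (k + 1) - r k| < z (k + 1) ∧ z (k + 1) < r (k + 1) + r k :=
    fun k hk => hrz k (by omega)
  set P := apexChain (stdBasisVec (m + 1)) r z
  refine ⟨fun k => if k < m + 1 then P k else 0, by simp, ?_, fun k hk => ?_, fun k hk => ?_⟩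
  · simpa [hr0] using (apexChain_spec hrz' hr0' (Nat.succ_pos m)).1
  · simpa [hk] using (apexChain_spec hrz' hr0' hk).2
  · rcases hk.lt_or_eq with hk | rfl
    · simpa [hk, show k < m + 1 by omega] using norm_apexChain_succ_sub hrz' hr0' (by omega)
    · simpa [hrm] using (apexChain_spec hrz' hr0' (Nat.lt_succ_self k)).1

theorem exists_points_with_prescribed_distances_general (n : ℕ)
    (z : Fin (n + 1) → ℝ) (hz0 : 0 < z 0) (hmono : Monotone z)
    (hineq : 2 * z (Fin.last n) < ∑ i, z i) :
    ∃ P : Fin (n + 1) → EuclideanSpace ℝ (Fin n),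
      P (Fin.last n) = 0 ∧
      (∀ k : Fin (n + 1), (k : ℕ) < n →
        P k ∈ Submodule.span ℝ
          ((fun i : Fin n => EuclideanSpace.single i (1 : ℝ)) '' {i | (i : ℕ) < (k : ℕ) + 1}) ∧
        P k ∉ Submodule.span ℝ
          ((fun i : Fin n => EuclideanSpace.single i (1 : ℝ)) '' {i | (i : ℕ) < (k : ℕ)})) ∧
      ‖P 0 - P (Fin.last n)‖ = z 0 ∧
      (∀ k : Fin (n + 1), 1 ≤ (k : ℕ) → ‖P k - P (k - 1)‖ = z k) := by
  set y : ℕ → ℝ := fun i => z (Fin.clamp i n)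
  have hy : ∀ k : Fin (n + 1), y k = z k := fun k =>
    congrArg z (Fin.ext (min_eq_left (Nat.lt_succ_iff.mp k.isLt)))
  have hy_mono : Monotone y := fun a b hab => hmono (min_le_min_right n hab)
  have hsum : ∑ i, z i = ∑ i ∈ range (n + 1), y i := by
    simp only [← hy, Fin.sum_univ_eq_sum_range y]
  obtain ⟨m, rfl⟩ : ∃ m, n = m + 1 := Nat.exists_eq_succ_of_ne_zero (by
    rintro rfl; simp at hineq; linarith)
  rw [hsum, sum_range_succ, ← hy (Fin.last _), Fin.val_last] at hineq
  obtain ⟨Q, hQ_last, hQ_zero, hQ_span, hQ_dist⟩ :=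
    exists_closed_chain (m := m) (hy 0 ▸ hz0) hy_mono (by linarith)
  refine ⟨fun k => Q k, hQ_last, fun k hk => hQ_span k hk,
    by simpa [hQ_last, ← hy 0] using hQ_zero, fun k hk => ?_⟩
  obtain ⟨j, hj⟩ : ∃ j, (k : ℕ) = j + 1 := ⟨k - 1, by omega⟩
  have hk1 : ((k - 1 : Fin (m + 2)) : ℕ) = j := by
    rw [Fin.coe_sub_one, if_neg (by rintro rfl; simp at hk)]; omega
  simp only [hk1, hj, ← hy k]
  exact hQ_dist j (by omega)

theorem exists_points_with_prescribed_distances (n : ℕ) (hn : 2 ≤ n)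
    (z : Fin (n + 1) → ℝ) (hz0 : 0 < z 0) (hmono : Monotone z)
    (hineq : 2 * z (Fin.last n) < ∑ i, z i) :
    ∃ P : Fin (n + 1) → EuclideanSpace ℝ (Fin n),
      P (Fin.last n) = 0 ∧
      (∀ k : Fin (n + 1), (k : ℕ) < n →
        P k ∈ Submodule.span ℝ
          ((fun i : Fin n => EuclideanSpace.single i (1 : ℝ)) '' {i | (i : ℕ) < (k : ℕ) + 1}) ∧
        P k ∉ Submodule.span ℝ
          ((fun i : Fin n => EuclideanSpace.single i (1 : ℝ)) '' {i | (i : ℕ) < (k : ℕ)})) ∧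
      ‖P 0 - P (Fin.last n)‖ = z 0 ∧
      (∀ k : Fin (n + 1), 1 ≤ (k : ℕ) → ‖P k - P (k - 1)‖ = z k) :=
  exists_points_with_prescribed_distances_general n z hz0 hmono hineq
end
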